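/- Let I be an ideal of a Noetherian commutative ring R. Then I is strongly annihilated if and only if I is countable strongly annihilated. -/

import Mathlib

/-- An ideal `I` is strongly annihilated if for each finite subset `F ⊆ I`
and each `b ∉ I` there exists `c` with `c * a = 0` for all `a ∈ F` but `c * b ≠ 0`. -/
def StronglyAnnihilated {R : Type*} [CommRing R] (I : Ideal R) : Prop :=
  ∀ F : Finset R, ↑F ⊆ (I : Set R) → ∀ b ∉ I, ∃ c : R, (∀ a ∈ F, c * a = 0) ∧ c * b ≠ 0

/-- An ideal `I` is countable strongly annihilated if for each countable subset `S ⊆ I`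
and each `b ∉ I` there exists `c` with `c * a = 0` for all `a ∈ S` but `c * b ≠ 0`. -/
def CountableStronglyAnnihilated {R : Type*} [CommRing R] (I : Ideal R) : Prop :=
  ∀ S : Set R, S.Countable → S ⊆ I → ∀ b ∉ I, ∃ c : R, (∀ a ∈ S, c * a = 0) ∧ c * b ≠ 0

/-! In a Noetherian ring the ideal generated by any set `S ⊆ I` is already generated by a finite
subset `F ⊆ S`, and an element killing `F` kills the ideal `F` generates, hence all of `S`. So
strong annihilation even holds for arbitrary subsets of `I`, in particular for countable ones. -/

section

variable {R : Type*} [CommRing R] {I : Ideal R}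

theorem StronglyAnnihilated.exists_mul_eq_zero_of_subset [IsNoetherianRing R]
    (h : StronglyAnnihilated I) {S : Set R} (hS : S ⊆ I) {b : R} (hb : b ∉ I) :
    ∃ c : R, (∀ a ∈ S, c * a = 0) ∧ c * b ≠ 0 := by
  obtain ⟨F, hFS, hspan⟩ :=
    (Submodule.fg_span_iff_fg_span_finset_subset S).1 (IsNoetherian.noetherian (Ideal.span S))
  obtain ⟨c, hcF, hcb⟩ := h F (hFS.trans hS) b hb
  have hc : c ∈ (Ideal.span S).annihilator := by
    rw [Ideal.span, hspan, Submodule.mem_annihilator_span]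
    exact fun a ↦ hcF a a.2
  exact ⟨c, fun a ha ↦ Submodule.mem_annihilator.1 hc a (Ideal.subset_span ha), hcb⟩

theorem CountableStronglyAnnihilated.stronglyAnnihilated (h : CountableStronglyAnnihilated I) :
    StronglyAnnihilated I :=
  fun F hF b hb ↦ h F F.countable_toSet hF b hb

end

theorem stmt12 {R : Type*} [CommRing R] [IsNoetherianRing R] (I : Ideal R) :
    StronglyAnnihilated I ↔ CountableStronglyAnnihilated I :=
  ⟨fun h _ _ hS _ hb ↦ h.exists_mul_eq_zero_of_subset hS hb,
    CountableStronglyAnnihilated.stronglyAnnihilated⟩
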